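/- arXiv:2408.04913 — 8 statements merged into one kernel-verified Lean document; each statement's English description precedes it below -/
import Mathlib

section
/- Let E(r₁), E(r₂) ⊆ ℝ^{2d} be convex sets, and let a, b ∈ ℝ^d. Suppose a ⊕ b ∈ E(r₁), b ⊕ a ∈ E(r₁), a ⊕ a ∈ E(r₂), and b ⊕ b ∈ E(r₂), where u ⊕ v denotes the concatenation of u and v. Then the point v ⊕ v, where v = (a + b)/2, lies in both E(r₁) and E(r₂); in particular E(r₁) ∩ E(r₂) ≠ ∅. -/
/-- Concatenation u ⊕ v in ℝ^{2d} is modeled as the pair (u, v) in ℝ^d × ℝ^d. -/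
theorem stmt0 (d : ℕ) (E₁ E₂ : Set ((Fin d → ℝ) × (Fin d → ℝ)))
    (hconv₁ : Convex ℝ E₁) (hconv₂ : Convex ℝ E₂)
    (a b : Fin d → ℝ)
    (hab : (a, b) ∈ E₁) (hba : (b, a) ∈ E₁)
    (haa : (a, a) ∈ E₂) (hbb : (b, b) ∈ E₂) :
    ((1/2 : ℝ) • (a + b), (1/2 : ℝ) • (a + b)) ∈ E₁ ∧
    ((1/2 : ℝ) • (a + b), (1/2 : ℝ) • (a + b)) ∈ E₂ ∧
    (E₁ ∩ E₂).Nonempty := by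
  have h1 := hconv₁ hab hba (by norm_num : (0:ℝ) ≤ 1/2) (by norm_num : (0:ℝ) ≤ 1/2) (by norm_num)
  have h2 := hconv₂ haa hbb (by norm_num : (0:ℝ) ≤ 1/2) (by norm_num : (0:ℝ) ≤ 1/2) (by norm_num)
  have e1 : (1/2:ℝ) • ((a, b) : (Fin d → ℝ) × (Fin d → ℝ)) + (1/2:ℝ) • (b, a)
      = ((1/2 : ℝ) • (a + b), (1/2 : ℝ) • (a + b)) := by
    simp [Prod.ext_iff, smul_add]; all_goals (try constructor) <;> module
  have e2 : (1/2:ℝ) • ((a, a) : (Fin d → ℝ) × (Fin d → ℝ)) + (1/2:ℝ) • (b, b)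
      = ((1/2 : ℝ) • (a + b), (1/2 : ℝ) • (a + b)) := by
    simp [Prod.ext_iff, smul_add]; all_goals (try constructor) <;> module
  rw [e1] at h1; rw [e2] at h2
  exact ⟨h1, h2, _, h1, h2⟩
end

section
/- There is no assignment of boxes r⁽¹⁾, r⁽²⁾, s⁽¹⁾, s⁽²⁾ ⊆ ℝ^d (axis-aligned boxes, i.e., products of closed intervals) and of pairs (e_a, b_a), (e_b, b_b), (e_c, b_c), (e_d, b_d) ∈ ℝ^d × ℝ^d such that: (i) e_a + b_b ∈ r⁽¹⁾ and e_b + b_a ∈ r⁽²⁾; (ii) e_a + b_c ∈ s⁽¹⁾ and e_c + b_a ∈ s⁽²⁾; (iii) e_d + b_c ∈ r⁽¹⁾ and e_c + b_d ∈ r⁽²⁾; (iv) e_d + b_b ∈ s⁽¹⁾ and e_b + b_d ∈ s⁽²⁾; and (v) r⁽¹⁾ ∩ s⁽¹⁾ = ∅ or r⁽²⁾ ∩ s⁽²⁾ = ∅. -/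
/-- An axis-aligned box in ℝ^d: the set of points between a lower and an upper corner. -/
def IsBox {d : ℕ} (S : Set (Fin d → ℝ)) : Prop :=
  ∃ l u : Fin d → ℝ, S = {x | ∀ i, l i ≤ x i ∧ x i ≤ u i}

lemma mid_mem {d : ℕ} {S : Set (Fin d → ℝ)} (hS : IsBox S) {x y : Fin d → ℝ}
    (hx : x ∈ S) (hy : y ∈ S) : (fun i => (x i + y i) / 2) ∈ S := by
  obtain ⟨l, u, rfl⟩ := hS
  intro i
  have h1 := hx i
  have h2 := hy i
  constructor <;> simp only <;> linarith [h1.1, h1.2, h2.1, h2.2]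

theorem stmt1 (d : ℕ) :
    ¬ ∃ (r1 r2 s1 s2 : Set (Fin d → ℝ)) (ea ba eb bb ec bc ed bd : Fin d → ℝ),
      IsBox r1 ∧ IsBox r2 ∧ IsBox s1 ∧ IsBox s2 ∧
      ea + bb ∈ r1 ∧ eb + ba ∈ r2 ∧
      ea + bc ∈ s1 ∧ ec + ba ∈ s2 ∧
      ed + bc ∈ r1 ∧ ec + bd ∈ r2 ∧
      ed + bb ∈ s1 ∧ eb + bd ∈ s2 ∧
      (r1 ∩ s1 = ∅ ∨ r2 ∩ s2 = ∅) := by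
  rintro ⟨r1, r2, s1, s2, ea, ba, eb, bb, ec, bc, ed, bd,
    hr1, hr2, hs1, hs2, h1, h2, h3, h4, h5, h6, h7, h8, hdisj⟩
  rcases hdisj with hd | hd
  · have hm1 : (fun i => ((ea + bb) i + (ed + bc) i) / 2) ∈ r1 := mid_mem hr1 h1 h5
    have hm2 : (fun i => ((ea + bc) i + (ed + bb) i) / 2) ∈ s1 := mid_mem hs1 h3 h7
    have heq : (fun i => ((ea + bb) i + (ed + bc) i) / 2)
        = (fun i => ((ea + bc) i + (ed + bb) i) / 2) := by
      funext i; simp only [Pi.add_apply]; ring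
    have : (fun i => ((ea + bb) i + (ed + bc) i) / 2) ∈ r1 ∩ s1 := ⟨hm1, heq ▸ hm2⟩
    simp [hd] at this
  · have hm1 : (fun i => ((eb + ba) i + (ec + bd) i) / 2) ∈ r2 := mid_mem hr2 h2 h6
    have hm2 : (fun i => ((ec + ba) i + (eb + bd) i) / 2) ∈ s2 := mid_mem hs2 h4 h8
    have heq : (fun i => ((eb + ba) i + (ec + bd) i) / 2)
        = (fun i => ((ec + ba) i + (eb + bd) i) / 2) := by
      funext i; simp only [Pi.add_apply]; ring
    have : (fun i => ((eb + ba) i + (ec + bd) i) / 2) ∈ r2 ∩ s2 := ⟨hm1, heq ▸ hm2⟩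
    simp [hd] at this
end

section
/- Let B(c, ρ) = {x ∈ ℝ^d : ‖x − c‖ < ρ} denote the open ball with center c and radius ρ ≥ 0 (empty if ρ = 0). Let Ball(A), Ball(B), Ball(C), Ball({a}), Ball({b}), Ball({c}) be open balls in ℝ^d and E(r) ∈ ℝ^d a vector. Suppose: Ball({a}) ⊆ {x : x + E(r) ∈ Ball({b})}, Ball({a}) ⊆ {x : x + E(r) ∈ Ball({c})}, Ball({b}) ⊆ Ball(B), Ball({c}) ⊆ Ball(C), and Ball(B) ∩ Ball(C) = ∅. Then Ball({a}) = ∅. -/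
theorem stmt3 (d : ℕ)
    (cA cB cC ca cb cc : EuclideanSpace ℝ (Fin d)) (r : EuclideanSpace ℝ (Fin d))
    (ρA ρB ρC ρa ρb ρc : ℝ)
    (hρA : 0 ≤ ρA) (hρB : 0 ≤ ρB) (hρC : 0 ≤ ρC)
    (hρa : 0 ≤ ρa) (hρb : 0 ≤ ρb) (hρc : 0 ≤ ρc)
    (h1 : Metric.ball ca ρa ⊆ {x | x + r ∈ Metric.ball cb ρb})
    (h2 : Metric.ball ca ρa ⊆ {x | x + r ∈ Metric.ball cc ρc})
    (h3 : Metric.ball cb ρb ⊆ Metric.ball cB ρB)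
    (h4 : Metric.ball cc ρc ⊆ Metric.ball cC ρC)
    (h5 : Metric.ball cB ρB ∩ Metric.ball cC ρC = ∅) :
    Metric.ball ca ρa = ∅ := by
  ext x
  simp only [Set.mem_empty_iff_false, iff_false]
  intro hx
  have : x + r ∈ Metric.ball cB ρB ∩ Metric.ball cC ρC := ⟨h3 (h1 hx), h4 (h2 hx)⟩
  rw [h5] at this
  exact this
end

section
/- Let Ball(A), Ball(B), Ball(C), Ball(D) be subsets of ℝ^d and E(r) ∈ ℝ^d a vector. Suppose {x : x + E(r) ∈ Ball(C)} ⊆ Ball(A), {x : x + E(r) ∈ Ball(D)} ⊆ Ball(B), and Ball(A) ∩ Ball(B) = ∅. Then Ball(C) ∩ Ball(D) = ∅. -/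
theorem stmt4 (d : ℕ)
    (BallA BallB BallC BallD : Set (Fin d → ℝ)) (r : Fin d → ℝ)
    (h1 : {x | x + r ∈ BallC} ⊆ BallA)
    (h2 : {x | x + r ∈ BallD} ⊆ BallB)
    (h3 : BallA ∩ BallB = ∅) :
    BallC ∩ BallD = ∅ := by
  ext y
  simp only [Set.mem_inter_iff, Set.mem_empty_iff_false, iff_false, not_and]
  intro hC hD
  have hx : y - r + r = y := by ring
  have hA : (y - r) ∈ BallA := h1 (by simp [hx, hC])
  have hB : (y - r) ∈ BallB := h2 (by simp [hx, hD])
  have : (y - r) ∈ BallA ∩ BallB := ⟨hA, hB⟩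
  rw [h3] at this
  exact this
end

section
/- Let Ball({a}), Ball({b}) ⊆ ℝ^d and E(r) ∈ ℝ^d. Suppose Ball({a}) ⊆ {x : x + E(r) ∈ Ball({b})} and Ball({b}) ⊆ {x : x + E(r) ∈ Ball({a})}. If Ball({a}) and Ball({b}) are open balls (possibly empty, given by a center and a radius, with Ball empty iff the radius is 0), then Ball({a}) ⊆ {x : x + E(r) ∈ Ball({a})}. -/
theorem stmt5 (d : ℕ)
    (ca cb : EuclideanSpace ℝ (Fin d)) (r : EuclideanSpace ℝ (Fin d))
    (ρa ρb : ℝ) (hρa : 0 ≤ ρa) (hρb : 0 ≤ ρb)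
    (h1 : Metric.ball ca ρa ⊆ {x | x + r ∈ Metric.ball cb ρb})
    (h2 : Metric.ball cb ρb ⊆ {x | x + r ∈ Metric.ball ca ρa}) :
    Metric.ball ca ρa ⊆ {x | x + r ∈ Metric.ball ca ρa} := by
  rcases le_or_gt ρa 0 with h | h
  · rw [Metric.ball_eq_empty.mpr h]
    exact Set.empty_subset _
  · -- show r = 0
    have step : ∀ x, x ∈ Metric.ball ca ρa → x + (r + r) ∈ Metric.ball ca ρa := by
      intro x hx
      have := h2 (h1 hx)
      simpa [add_assoc] using this
    have key : ∀ n : ℕ, ca + (n : ℝ) • (r + r) ∈ Metric.ball ca ρa := by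
      intro n
      induction n with
      | zero => simpa using h
      | succ n ih =>
        have := step _ ih
        have e : ca + ((n : ℝ) + 1) • (r + r) = ca + (n : ℝ) • (r + r) + (r + r) := by
          rw [add_smul, one_smul, add_assoc]
        rw [Nat.cast_succ, e]
        exact this
    have hr0 : r + r = 0 := by
      by_contra hne
      have hpos : 0 < ‖r + r‖ := norm_pos_iff.mpr hne
      obtain ⟨n, hn⟩ := Archimedean.arch ρa hpos
      have h2' := key (n + 1)
      rw [Metric.mem_ball, dist_eq_norm] at h2'
      have : ‖ca + ((n + 1 : ℕ) : ℝ) • (r + r) - ca‖ = ((n + 1 : ℕ) : ℝ) * ‖r + r‖ := by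
        rw [add_sub_cancel_left, norm_smul, Real.norm_natCast]
      rw [this] at h2'
      have hle : ρa ≤ ((n + 1 : ℕ) : ℝ) * ‖r + r‖ := by
        calc ρa ≤ n * ‖r + r‖ := by simpa [nsmul_eq_mul] using hn
        _ ≤ ((n + 1 : ℕ) : ℝ) * ‖r + r‖ := by
            apply mul_le_mul_of_nonneg_right _ hpos.le
            push_cast; linarith
      linarith
    have : r = 0 := by
      have h2 : (2:ℝ) • r = 0 := by
        rw [two_smul]; exact hr0
      simpa using h2
    intro x hx
    simpa [this] using hx
end

section
/- Let Head(r₁), Head(r₂), Tail(r₁), Tail(r₂) ⊆ ℝ^d and Box(C), Box(D₁), Box(D₂), Box({a}) ⊆ ℝ^d and Bump(C), Bump({b}) ∈ ℝ^d. Suppose: (i) Box({a}) ≠ ∅ and Box({a}) + Bump({b}) ⊆ Head(r₁); (ii) Head(r₁) − Bump(C) ⊆ Box(D₁); (iii) Head(r₂) − Bump(C) ⊆ Box(D₂); (iv) Head(r₁) ⊆ Head(r₂); (v) Box(D₁) ∩ Box(D₂) = ∅. Then a contradiction follows (such a configuration does not exist). -/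
theorem stmt8 (d : ℕ)
    (Head1 Head2 BoxC BoxD1 BoxD2 BoxA : Set (Fin d → ℝ))
    (BumpC BumpB : Fin d → ℝ)
    (hne : BoxA.Nonempty)
    (h1 : (fun x => x + BumpB) '' BoxA ⊆ Head1)
    (h2 : (fun x => x - BumpC) '' Head1 ⊆ BoxD1)
    (h3 : (fun x => x - BumpC) '' Head2 ⊆ BoxD2)
    (h4 : Head1 ⊆ Head2)
    (h5 : BoxD1 ∩ BoxD2 = ∅) :
    False := by
  obtain ⟨a, ha⟩ := hne
  have hh1 : a + BumpB ∈ Head1 := h1 ⟨a, ha, rfl⟩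
  have hd1 : a + BumpB - BumpC ∈ BoxD1 := h2 ⟨_, hh1, rfl⟩
  have hd2 : a + BumpB - BumpC ∈ BoxD2 := h3 ⟨_, h4 hh1, rfl⟩
  exact Set.eq_empty_iff_forall_notMem.mp h5 _ ⟨hd1, hd2⟩
end

section
/- Suppose the language L is finite (only finitely many sentences). If an embedding method M is fully KB-expressive for L, then for every satisfiable L-knowledge base K there exists a strongly KB-faithful M-model of K. -/
variable {Sentence Interp Emb : Type*}

/-- A set of sentences is satisfiable if some interpretation satisfies all of them. -/
def KSat (Sat : Interp → Sentence → Prop) (K : Set Sentence) : Prop :=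
  ∃ i, ∀ α ∈ K, Sat i α

/-- Classical entailment: every interpretation satisfying K satisfies α. -/
def Entails (Sat : Interp → Sentence → Prop) (K : Set Sentence) (α : Sentence) : Prop :=
  ∀ i, (∀ β ∈ K, Sat i β) → Sat i α

/-- E is an M-model of K: E satisfies (under the embedding semantics) every sentence of K. -/
def IsMModel (EmbSat : Emb → Sentence → Prop) (K : Set Sentence) (E : Emb) : Prop :=
  ∀ α ∈ K, EmbSat E α

/-- Strong faithfulness restricted to sentences satisfying P. -/
def StronglyFaithfulOn (Sat : Interp → Sentence → Prop)
    (EmbSat : Emb → Sentence → Prop) (P : Sentence → Prop)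
    (K : Set Sentence) (E : Emb) : Prop :=
  ∀ α, P α → EmbSat E α → Entails Sat K α

/-- Weak faithfulness restricted to sentences satisfying P. -/
def WeaklyFaithfulOn (Sat : Interp → Sentence → Prop)
    (EmbSat : Emb → Sentence → Prop) (P : Sentence → Prop)
    (K : Set Sentence) (E : Emb) : Prop :=
  ∀ α, P α → EmbSat E α → KSat Sat (K ∪ {α})

/-- Entailment closure restricted to sentences satisfying P. -/
def EntailedOn (Sat : Interp → Sentence → Prop)
    (EmbSat : Emb → Sentence → Prop) (P : Sentence → Prop)
    (K : Set Sentence) (E : Emb) : Prop :=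
  ∀ α, P α → Entails Sat K α → EmbSat E α

/-- The method (given by EmbSat) is guaranteed to have a property: every M-model
of every satisfiable KB has the property. -/
def Guaranteed (Sat : Interp → Sentence → Prop)
    (EmbSat : Emb → Sentence → Prop)
    (prop : Set Sentence → Emb → Prop) : Prop :=
  ∀ K E, KSat Sat K → IsMModel EmbSat K E → prop K E

theorem stmt15 {Sentence Interp Emb : Type*} [Fintype Sentence]
    (Sat : Interp → Sentence → Prop) (EmbSat : Emb → Sentence → Prop)
    (hfull : ∀ K K' : Set Sentence, KSat Sat K →
        (∀ α ∈ K', ¬ Entails Sat K α) →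
        ∃ E, IsMModel EmbSat K E ∧ ∀ α ∈ K', ¬ EmbSat E α) :
    ∀ K : Set Sentence, KSat Sat K →
      ∃ E, IsMModel EmbSat K E ∧ ∀ α, EmbSat E α → Entails Sat K α := by
  intro K hK
  obtain ⟨E, hE, h⟩ := hfull K {α | ¬ Entails Sat K α} hK (fun α hα => hα)
  exact ⟨E, hE, fun α hα => by_contra fun hn => h α hn hα⟩
end

section
/- For the ExpressivE semantics, where hyper-parallelograms are convex regions of ℝ^{2d}, ⊕ denotes concatenation, and r(x,y) holds iff E(x) ⊕ E(y) ∈ E(r), the knowledge base {r₁(a,b), r₁(b,a), r₂(a,a), r₂(b,b)} together with the pattern r₁ ⊑ ¬r₂ (interpreted as E(r₁) ∩ E(r₂) = ∅) has no model: from the four membership facts and convexity of E(r₁), E(r₂) it follows that E(r₁) ∩ E(r₂) ≠ ∅. -/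
/-- Concatenation u ⊕ v in ℝ^{2d} is modeled as the pair (u, v) in ℝ^d × ℝ^d.
ExpressivE cannot model {r₁(a,b), r₁(b,a), r₂(a,a), r₂(b,b), r₁ ⊑ ¬r₂}:
the membership facts and convexity force E(r₁) ∩ E(r₂) ≠ ∅. -/
theorem stmt18 (d : ℕ) (E₁ E₂ : Set ((Fin d → ℝ) × (Fin d → ℝ)))
    (hconv₁ : Convex ℝ E₁) (hconv₂ : Convex ℝ E₂)
    (a b : Fin d → ℝ)
    (hab : (a, b) ∈ E₁) (hba : (b, a) ∈ E₁)
    (haa : (a, a) ∈ E₂) (hbb : (b, b) ∈ E₂) :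
    (E₁ ∩ E₂).Nonempty := by
  refine ⟨(2:ℝ)⁻¹ • (a, b) + (2:ℝ)⁻¹ • (b, a), ?_, ?_⟩
  · exact hconv₁ hab hba (by norm_num) (by norm_num) (by norm_num)
  · have h : (2:ℝ)⁻¹ • ((a,a) : (Fin d → ℝ) × (Fin d → ℝ)) + (2:ℝ)⁻¹ • (b,b) ∈ E₂ :=
      hconv₂ haa hbb (by norm_num) (by norm_num) (by norm_num)
    convert h using 1
    simp [Prod.smul_mk, Prod.mk_add_mk]
    abel
end
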